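/- arXiv:2508.17349 — 9 statements merged into one kernel-verified Lean document; each statement's English description precedes it below -/
import Mathlib

section
/- Let G be a bipartite graph and v a vertex with two distinct degree-1 neighbors u and w. Then G admits a 2-layer fan-planar drawing if and only if G − w admits one. -/
variable {V : Type*}

/-- A bipartite graph with layers `X` and `Y`; each edge is a pair `(x, y)` with
`x ∈ X` and `y ∈ Y`. -/
structure BipGraph (V : Type*) where
  X : Set V
  Y : Set V
  disj : Disjoint X Y
  E : Set (V × V)
  mem_fst : ∀ e ∈ E, e.1 ∈ X
  mem_snd : ∀ e ∈ E, e.2 ∈ Y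

def BipGraph.Adj (G : BipGraph V) (a b : V) : Prop := (a, b) ∈ G.E ∨ (b, a) ∈ G.E

/-- Open neighborhood. -/
def BipGraph.nbhd (G : BipGraph V) (v : V) : Set V := {u | G.Adj v u}

noncomputable def BipGraph.deg (G : BipGraph V) (v : V) : ℕ := (G.nbhd v).ncard

/-- Two edges cross in the 2-layer drawing given by positions `px`, `py`. -/
def Cross (px py : V → ℝ) (e f : V × V) : Prop :=
  (px e.1 < px f.1 ∧ py f.2 < py e.2) ∨ (px f.1 < px e.1 ∧ py e.2 < py f.2)

/-- `(px, py)` encodes a 2-layer drawing of `G`: positions are injective on each layer. -/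
def IsDrawing (G : BipGraph V) (px py : V → ℝ) : Prop :=
  Set.InjOn px G.X ∧ Set.InjOn py G.Y

/-- A drawing is fan-planar if for each edge, all edges crossing it share a common endpoint. -/
def FanPlanar (G : BipGraph V) (px py : V → ℝ) : Prop :=
  ∀ e ∈ G.E, ∃ c : V, ∀ f ∈ G.E, Cross px py e f → f.1 = c ∨ f.2 = c

def AdmitsFanPlanar (G : BipGraph V) : Prop :=
  ∃ px py : V → ℝ, IsDrawing G px py ∧ FanPlanar G px py

/-- Three edges that pairwise share no endpoint (form a matching). -/
def PairwiseDisjoint3 (e f f' : V × V) : Prop :=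
  e.1 ≠ f.1 ∧ e.1 ≠ f'.1 ∧ f.1 ≠ f'.1 ∧ e.2 ≠ f.2 ∧ e.2 ≠ f'.2 ∧ f.2 ≠ f'.2

/-- A violating triple: `f` and `f'` both cross `e` and the three edges form a matching. -/
def ViolatingTriple (G : BipGraph V) (px py : V → ℝ) (e f f' : V × V) : Prop :=
  e ∈ G.E ∧ f ∈ G.E ∧ f' ∈ G.E ∧ Cross px py e f ∧ Cross px py e f' ∧
    PairwiseDisjoint3 e f f'

/-- Induced subgraph with a vertex deleted. -/
def BipGraph.deleteVert (G : BipGraph V) (w : V) : BipGraph V where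
  X := G.X \ {w}
  Y := G.Y \ {w}
  disj := G.disj.mono Set.diff_subset Set.diff_subset
  E := {e ∈ G.E | e.1 ≠ w ∧ e.2 ≠ w}
  mem_fst := fun e he => ⟨G.mem_fst e he.1, he.2.1⟩
  mem_snd := fun e he => ⟨G.mem_snd e he.1, he.2.2⟩

def NoIsolated (G : BipGraph V) : Prop := ∀ v ∈ G.X ∪ G.Y, (G.nbhd v).Nonempty

lemma cross_comm (px py : V → ℝ) (e f : V × V) : Cross px py e f ↔ Cross px py f e := by
  unfold Cross; tauto

lemma BipGraph.ext' (G H : BipGraph V) (hX : G.X = H.X) (hY : G.Y = H.Y) (hE : G.E = H.E) :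
    G = H := by
  cases G; cases H; simp_all

def BipGraph.transpose (G : BipGraph V) : BipGraph V where
  X := G.Y
  Y := G.X
  disj := G.disj.symm
  E := Prod.swap '' G.E
  mem_fst := by rintro e ⟨f, hf, rfl⟩; exact G.mem_snd f hf
  mem_snd := by rintro e ⟨f, hf, rfl⟩; exact G.mem_fst f hf

lemma transpose_transpose (G : BipGraph V) : G.transpose.transpose = G := by
  apply BipGraph.ext' <;> try rfl
  show Prod.swap '' (Prod.swap '' G.E) = G.E
  ext e
  simp [Set.image_swap_eq_preimage_swap]

lemma nbhd_transpose (G : BipGraph V) (x : V) : G.transpose.nbhd x = G.nbhd x := by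
  ext y
  simp only [BipGraph.nbhd, BipGraph.Adj, BipGraph.transpose, Set.mem_setOf_eq,
    Set.image_swap_eq_preimage_swap, Set.mem_preimage, Prod.swap_prod_mk]
  tauto

lemma transpose_deleteVert (G : BipGraph V) (w : V) :
    (G.deleteVert w).transpose = G.transpose.deleteVert w := by
  apply BipGraph.ext' <;> try rfl
  show Prod.swap '' _ = _
  ext e
  simp only [BipGraph.deleteVert, BipGraph.transpose, Set.image_swap_eq_preimage_swap,
    Set.mem_preimage, Set.mem_setOf_eq, Prod.fst_swap, Prod.snd_swap]
  tauto

lemma admits_transpose (G : BipGraph V) (h : AdmitsFanPlanar G) :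
    AdmitsFanPlanar G.transpose := by
  obtain ⟨px, py, ⟨h1, h2⟩, hfan⟩ := h
  refine ⟨py, px, ⟨h2, h1⟩, ?_⟩
  rintro e ⟨e', he', rfl⟩
  obtain ⟨c, hc⟩ := hfan e' he'
  refine ⟨c, ?_⟩
  rintro f ⟨f', hf', rfl⟩ hcr
  have hcr' : Cross px py e' f' := by
    simp only [Cross, Prod.fst_swap, Prod.snd_swap] at hcr ⊢
    tauto
  rcases hc f' hf' hcr' with h | h
  · right; simpa
  · left; simpa

lemma admits_delete (G : BipGraph V) (w : V) (h : AdmitsFanPlanar G) :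
    AdmitsFanPlanar (G.deleteVert w) := by
  obtain ⟨px, py, ⟨h1, h2⟩, hfan⟩ := h
  refine ⟨px, py, ⟨h1.mono Set.diff_subset, h2.mono Set.diff_subset⟩, ?_⟩
  intro e he
  obtain ⟨c, hc⟩ := hfan e he.1
  exact ⟨c, fun f hf hcr => hc f hf.1 hcr⟩

lemma backward_X (G : BipGraph V) (v u w : V) (huw : u ≠ w)
    (hu : G.nbhd u = {v}) (hw : G.nbhd w = {v}) (hwv : (w, v) ∈ G.E)
    (h : AdmitsFanPlanar (G.deleteVert w)) : AdmitsFanPlanar G := by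
  classical
  have hwX : w ∈ G.X := G.mem_fst _ hwv
  have hvY : v ∈ G.Y := G.mem_snd _ hwv
  have hwY : w ∉ G.Y := fun hm => Set.disjoint_left.mp G.disj hwX hm
  have hvX : v ∉ G.X := fun hm => Set.disjoint_left.mp G.disj hm hvY
  have huv : (u, v) ∈ G.E := by
    have hv : v ∈ G.nbhd u := by rw [hu]; rfl
    rcases hv with h' | h'
    · exact h'
    · exact absurd (G.mem_fst _ h') hvX
  have huX : u ∈ G.X := G.mem_fst _ huv
  have huY : u ∉ G.Y := fun hm => Set.disjoint_left.mp G.disj huX hm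
  have hvw : v ≠ w := fun h' => hwY (h' ▸ hvY)
  have hedge_w : ∀ f ∈ G.E, f.1 = w → f = (w, v) := by
    intro f hf h1
    have h2 : f.2 ∈ G.nbhd w := by
      left
      show (w, f.2) ∈ G.E
      rw [← h1]
      exact hf
    rw [hw] at h2
    exact Prod.ext h1 h2
  have hedge_u : ∀ f ∈ G.E, f.1 = u → f = (u, v) := by
    intro f hf h1
    have h2 : f.2 ∈ G.nbhd u := by
      left
      show (u, f.2) ∈ G.E
      rw [← h1]
      exact hf
    rw [hu] at h2
    exact Prod.ext h1 h2
  have hsnd_ne_w : ∀ f ∈ G.E, f.2 ≠ w := fun f hf h' => hwY (h' ▸ G.mem_snd f hf)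
  have hsnd_ne_u : ∀ f ∈ G.E, f.2 ≠ u := fun f hf h' => huY (h' ▸ G.mem_snd f hf)
  have huv' : (u, v) ∈ (G.deleteVert w).E := ⟨huv, huw, hvw⟩
  obtain ⟨px, py, ⟨hpx, hpy⟩, hfan⟩ := h
  set g : ℝ → ℝ := fun t => if px u < t then t + 1 else t with hg_def
  have hg : StrictMono g := by
    intro s t hst
    simp only [hg_def]
    by_cases h1 : px u < s
    · rw [if_pos h1, if_pos (h1.trans hst)]; linarith
    · by_cases h2 : px u < t
      · rw [if_neg h1, if_pos h2]; push_neg at h1; linarith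
      · rw [if_neg h1, if_neg h2]; exact hst
  set px' : V → ℝ := fun x => if x = w then px u + 1/2 else g (px x) with hpx'_def
  have hpx'w : px' w = px u + 1/2 := if_pos rfl
  have hlow : ∀ x, x ≠ w → (px' x < px' w ↔ px x ≤ px u) := by
    intro x hx
    rw [hpx'w]
    simp only [hpx'_def, if_neg hx, hg_def]
    by_cases h1 : px u < px x
    · rw [if_pos h1]; constructor <;> intro <;> linarith
    · rw [if_neg h1]; push_neg at h1; constructor <;> intro <;> linarith
  have hhigh : ∀ x, x ≠ w → (px' w < px' x ↔ px u < px x) := by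
    intro x hx
    rw [hpx'w]
    simp only [hpx'_def, if_neg hx, hg_def]
    by_cases h1 : px u < px x
    · rw [if_pos h1]; constructor <;> intro <;> linarith
    · rw [if_neg h1]; push_neg at h1; constructor <;> intro <;> linarith
  have hcmp : ∀ x y, x ≠ w → y ≠ w → (px' x < px' y ↔ px x < px y) := by
    intro x y hx hy
    simp only [hpx'_def, if_neg hx, if_neg hy]
    exact hg.lt_iff_lt
  have hcross_old : ∀ e f : V × V, e.1 ≠ w → f.1 ≠ w →
      (Cross px' py e f ↔ Cross px py e f) := by
    intro e f he hf
    unfold Cross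
    rw [hcmp _ _ he hf, hcmp _ _ hf he]
  have hcross_w : ∀ f : V × V, f.1 ≠ w → px f.1 ≠ px u →
      (Cross px' py (w, v) f ↔ Cross px py (u, v) f) := by
    intro f hfw hne
    have h1 : px' w < px' f.1 ↔ px u < px f.1 := hhigh f.1 hfw
    have h2 : px' f.1 < px' w ↔ px f.1 < px u := by
      rw [hlow f.1 hfw]
      exact ⟨fun h' => lt_of_le_of_ne h' hne, le_of_lt⟩
    show (px' w < px' f.1 ∧ py f.2 < py v) ∨ (px' f.1 < px' w ∧ py v < py f.2) ↔
      (px u < px f.1 ∧ py f.2 < py v) ∨ (px f.1 < px u ∧ py v < py f.2)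
    rw [h1, h2]
  have hinj : Set.InjOn px' G.X := by
    intro x hx y hy hxy
    by_cases hxw : x = w <;> by_cases hyw : y = w
    · rw [hxw, hyw]
    · exfalso
      rw [hxw, hpx'w] at hxy
      simp only [hpx'_def, if_neg hyw, hg_def] at hxy
      by_cases h1 : px u < px y
      · rw [if_pos h1] at hxy; linarith
      · rw [if_neg h1] at hxy; push_neg at h1; linarith
    · exfalso
      rw [hyw, hpx'w] at hxy
      simp only [hpx'_def, if_neg hxw, hg_def] at hxy
      by_cases h1 : px u < px x
      · rw [if_pos h1] at hxy; linarith
      · rw [if_neg h1] at hxy; push_neg at h1; linarith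
    · have hgg : g (px x) = g (px y) := by
        simpa only [hpx'_def, if_neg hxw, if_neg hyw] using hxy
      exact hpx ⟨hx, hxw⟩ ⟨hy, hyw⟩ (hg.injective hgg)
  have hpy' : Set.InjOn py G.Y := by
    have hYY : G.Y \ {w} = G.Y := Set.diff_singleton_eq_self hwY
    have := hpy
    rw [show (G.deleteVert w).Y = G.Y \ {w} from rfl, hYY] at this
    exact this
  refine ⟨px', py, ⟨hinj, hpy'⟩, ?_⟩
  intro e he
  by_cases hew : e.1 = w
  · have heq : e = (w, v) := hedge_w e he hew
    obtain ⟨c, hc⟩ := hfan (u, v) huv'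
    refine ⟨c, ?_⟩
    intro f hf hcr
    rw [heq] at hcr
    by_cases hfw : f.1 = w
    · exfalso
      rw [hedge_w f hf hfw] at hcr
      rcases hcr with ⟨h1, _⟩ | ⟨h1, _⟩ <;> exact lt_irrefl _ h1
    by_cases hfu : f.1 = u
    · exfalso
      rw [hedge_u f hf hfu] at hcr
      rcases hcr with ⟨_, h2⟩ | ⟨_, h2⟩ <;> exact lt_irrefl _ h2
    · have hne : px f.1 ≠ px u := fun h' =>
        hfu (hpx ⟨G.mem_fst f hf, hfw⟩ ⟨huX, huw⟩ h')
      rw [hcross_w f hfw hne] at hcr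
      exact hc f ⟨hf, hfw, hsnd_ne_w f hf⟩ hcr
  · have he' : e ∈ (G.deleteVert w).E := ⟨he, hew, hsnd_ne_w e he⟩
    obtain ⟨c, hc⟩ := hfan e he'
    by_cases hcu : Cross px py e (u, v)
    · refine ⟨v, ?_⟩
      intro f hf hcr
      by_cases hfw : f.1 = w
      · rw [hedge_w f hf hfw]; right; rfl
      by_cases hfu : f.1 = u
      · rw [hedge_u f hf hfu]; right; rfl
      · have hf' : f ∈ (G.deleteVert w).E := ⟨hf, hfw, hsnd_ne_w f hf⟩
        rw [hcross_old e f hew hfw] at hcr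
        rcases hc f hf' hcr with h' | h'
        · rcases hc (u, v) huv' hcu with h2 | h2
          · exact absurd (h'.trans h2.symm) hfu
          · left; exact h'.trans h2.symm
        · rcases hc (u, v) huv' hcu with h2 | h2
          · exact absurd (h'.trans h2.symm) (hsnd_ne_u f hf)
          · right; exact h'.trans h2.symm
    · refine ⟨c, ?_⟩
      intro f hf hcr
      by_cases hfw : f.1 = w
      · exfalso
        rw [hedge_w f hf hfw] at hcr
        by_cases heu : e.1 = u
        · rw [hedge_u e he heu] at hcr
          rcases hcr with ⟨_, h2⟩ | ⟨_, h2⟩ <;> exact lt_irrefl _ h2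
        · have hne : px e.1 ≠ px u := fun h' =>
            heu (hpx ⟨G.mem_fst e he, hew⟩ ⟨huX, huw⟩ h')
          rw [cross_comm] at hcr
          rw [hcross_w e hew hne] at hcr
          rw [cross_comm] at hcr
          exact hcu hcr
      by_cases hfu : f.1 = u
      · exfalso
        rw [hedge_u f hf hfu] at hcr
        rw [hcross_old e (u, v) hew huw] at hcr
        exact hcu hcr
      · have hf' : f ∈ (G.deleteVert w).E := ⟨hf, hfw, hsnd_ne_w f hf⟩
        rw [hcross_old e f hew hfw] at hcr
        exact hc f hf' hcr

/-- If `v` has two distinct degree-1 neighbors `u`, `w`, then `G` is 2-layer fan-planar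
iff `G - w` is. -/
theorem stmt1 (G : BipGraph V) (v u w : V) (huw : u ≠ w)
    (hu : G.nbhd u = {v}) (hw : G.nbhd w = {v}) :
    AdmitsFanPlanar G ↔ AdmitsFanPlanar (G.deleteVert w) := by
  constructor
  · exact fun h => admits_delete G w h
  · intro h
    have hv : v ∈ G.nbhd w := by rw [hw]; rfl
    rcases hv with hwv | hvw
    · exact backward_X G v u w huw hu hw hwv h
    · have h1 : AdmitsFanPlanar ((G.deleteVert w).transpose) := admits_transpose _ h
      rw [transpose_deleteVert] at h1
      have h2 : AdmitsFanPlanar G.transpose :=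
        backward_X G.transpose v u w huw
          (by rw [nbhd_transpose]; exact hu)
          (by rw [nbhd_transpose]; exact hw)
          ⟨(v, w), hvw, rfl⟩ h1
      have h3 := admits_transpose _ h2
      rwa [transpose_transpose] at h3
end

section
/- If a bipartite graph G contains a vertex v having at least five neighbors each of degree at least 3 in G, then G admits no 2-layer fan-planar drawing. -/
variable {V : Type*}

/-! Order five neighbours `u₀ < m₁ < m₂ < m₃ < u₄` of degree at least 3 of `v ∈ X` along the
`Y`-layer. Every edge from a vertex left of `v` to some `mᵢ` crosses `vu₀`, and every edge from a
vertex right of `v` to some `mᵢ` crosses `vu₄`, so it passes through the fan centre `cL` of `vu₀`,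
resp. `cR` of `vu₄`. A middle vertex other than `cL`, `cR` has two neighbours besides `v`, which
forces both centres into `X`, left and right of `v`; then every `mᵢ` is adjacent to both. Now the
edge `cL m₂` is crossed by `v u₀` and by `cR m₁`, two edges without a common endpoint. -/

lemma Set.exists_strictMono_comp_of_le_ncard {α β : Type*} [LinearOrder β] {s : Set α}
    {f : α → β} (hf : s.InjOn f) {n : ℕ} (hn : n ≤ s.ncard) :
    ∃ g : Fin n → α, (∀ i, g i ∈ s) ∧ StrictMono (f ∘ g) := by
  rcases s.finite_or_infinite with hs | hs
  · set t := hs.toFinset.image f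
    have ht : n ≤ t.card := by
      rwa [Finset.card_image_of_injOn (by simpa), ← Set.ncard_eq_toFinset_card s hs]
    have hmem : ∀ i, ∃ a ∈ hs.toFinset, f a = t.orderEmbOfFin rfl (Fin.castLE ht i) :=
      fun i => Finset.mem_image.1 (t.orderEmbOfFin_mem rfl _)
    choose g hgs hgf using hmem
    simp only [Set.Finite.mem_toFinset] at hgs
    refine ⟨g, hgs, fun i j hij => ?_⟩
    simp only [Function.comp, hgf]
    exact (t.orderEmbOfFin rfl).strictMono ((Fin.castLE_lt_castLE_iff ht).2 hij)
  · rw [hs.ncard, Nat.le_zero] at hn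
    subst hn
    exact ⟨Fin.elim0, fun i => i.elim0, fun i => i.elim0⟩

namespace BipGraph

variable (G : BipGraph V)

lemma ne_of_mem_X_of_mem_Y {x y : V} (hx : x ∈ G.X) (hy : y ∈ G.Y) : x ≠ y :=
  fun h => Set.disjoint_left.mp G.disj hx (h ▸ hy)

lemma mem_E_of_adj_of_mem_X {a b : V} (ha : a ∈ G.X) (h : G.Adj a b) : (a, b) ∈ G.E :=
  h.resolve_right fun hba => G.ne_of_mem_X_of_mem_Y ha (G.mem_snd _ hba) rfl

lemma mem_E_of_adj_of_mem_Y {a b : V} (ha : a ∈ G.Y) (h : G.Adj a b) : (b, a) ∈ G.E :=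
  h.resolve_left fun hab => G.ne_of_mem_X_of_mem_Y (G.mem_fst _ hab) ha rfl

lemma exists_ne_ne_of_three_le_deg {m : V} (hm : m ∈ G.Y) (h : 3 ≤ G.deg m) (v : V) :
    ∃ a b, a ≠ b ∧ a ≠ v ∧ b ≠ v ∧ (a, m) ∈ G.E ∧ (b, m) ∈ G.E := by
  unfold deg at h
  have hfin : (G.nbhd m).Finite := Set.finite_of_ncard_ne_zero (by omega)
  have h2 : 1 < (G.nbhd m \ {v}).ncard := by
    have := Set.le_ncard_sdiff {v} (G.nbhd m)
    rw [Set.ncard_singleton] at this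
    omega
  obtain ⟨a, b, ⟨ha, hav⟩, ⟨hb, hbv⟩, hab⟩ := (Set.one_lt_ncard_iff hfin.sdiff).mp h2
  exact ⟨a, b, hab, hav, hbv, G.mem_E_of_adj_of_mem_Y hm ha, G.mem_E_of_adj_of_mem_Y hm hb⟩

def swap : BipGraph V where
  X := G.Y
  Y := G.X
  disj := G.disj.symm
  E := Prod.swap ⁻¹' G.E
  mem_fst _ he := G.mem_snd _ he
  mem_snd _ he := G.mem_fst _ he

lemma swap_nbhd (u : V) : G.swap.nbhd u = G.nbhd u := by
  ext w
  simp [nbhd, Adj, swap, or_comm]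

lemma swap_deg (u : V) : G.swap.deg u = G.deg u := by
  rw [deg, deg, swap_nbhd]

end BipGraph

lemma cross_swap_iff {px py : V → ℝ} {e f : V × V} :
    Cross py px e.swap f.swap ↔ Cross px py e f := by
  simp only [Cross, Prod.fst_swap, Prod.snd_swap]
  tauto

lemma AdmitsFanPlanar.swap {G : BipGraph V} (h : AdmitsFanPlanar G) : AdmitsFanPlanar G.swap := by
  obtain ⟨px, py, ⟨hpx, hpy⟩, hF⟩ := h
  refine ⟨py, px, ⟨hpy, hpx⟩, fun e he => ?_⟩
  obtain ⟨c, hc⟩ := hF e.swap he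
  exact ⟨c, fun f hf hcross => (hc f.swap hf (cross_swap_iff.2 hcross)).symm⟩

def IsFanCenter (G : BipGraph V) (px py : V → ℝ) (e : V × V) (c : V) : Prop :=
  ∀ f ∈ G.E, Cross px py e f → f.1 = c ∨ f.2 = c

section FanCenter

variable {G : BipGraph V} {px py : V → ℝ}

lemma FanPlanar.fst_eq_or_snd_eq (hF : FanPlanar G px py) {e f g : V × V} (he : e ∈ G.E)
    (hf : f ∈ G.E) (hg : g ∈ G.E) (hef : Cross px py e f) (heg : Cross px py e g) :
    f.1 = g.1 ∨ f.2 = g.2 := by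
  obtain ⟨c, hc⟩ := hF e he
  have hfg := G.ne_of_mem_X_of_mem_Y (G.mem_fst _ hf) (G.mem_snd _ hg)
  have hgf := G.ne_of_mem_X_of_mem_Y (G.mem_fst _ hg) (G.mem_snd _ hf)
  rcases hc f hf hef with h1 | h1 <;> rcases hc g hg heg with h2 | h2
  · exact Or.inl (h1.trans h2.symm)
  · exact absurd (h1.trans h2.symm) hfg
  · exact absurd (h2.trans h1.symm) hgf
  · exact Or.inr (h1.trans h2.symm)

variable {v u u' cL cR n : V}

lemma eq_center_of_between (hL : IsFanCenter G px py (v, u) cL)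
    (hR : IsFanCenter G px py (v, u') cR) (hun : py u < py n) (hnu' : py n < py u')
    (hnL : n ≠ cL) (hnR : n ≠ cR) {w : V} (hw : (w, n) ∈ G.E) (hwv : px w ≠ px v) :
    (w = cL ∧ px w < px v) ∨ (w = cR ∧ px v < px w) := by
  rcases hwv.lt_or_gt with h | h
  · exact Or.inl ⟨(hL _ hw (Or.inr ⟨h, hun⟩)).resolve_right hnL, h⟩
  · exact Or.inr ⟨(hR _ hw (Or.inl ⟨h, hnu'⟩)).resolve_right hnR, h⟩

lemma adj_centers_of_between (hpx : Set.InjOn px G.X) (hv : v ∈ G.X)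
    (hL : IsFanCenter G px py (v, u) cL) (hR : IsFanCenter G px py (v, u') cR)
    (hun : py u < py n) (hnu' : py n < py u') (hnL : n ≠ cL) (hnR : n ≠ cR)
    (hn : n ∈ G.Y) (hdeg : 3 ≤ G.deg n) :
    (cL, n) ∈ G.E ∧ (cR, n) ∈ G.E ∧ px cL < px v ∧ px v < px cR := by
  obtain ⟨a, b, hab, hav, hbv, ha, hb⟩ := G.exists_ne_ne_of_three_le_deg hn hdeg v
  have hpx_ne : ∀ {w}, (w, n) ∈ G.E → w ≠ v → px w ≠ px v :=
    fun hw hwv h => hwv (hpx (G.mem_fst _ hw) hv h)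
  rcases eq_center_of_between hL hR hun hnu' hnL hnR ha (hpx_ne ha hav) with
    ⟨rfl, ha'⟩ | ⟨rfl, ha'⟩ <;>
  rcases eq_center_of_between hL hR hun hnu' hnL hnR hb (hpx_ne hb hbv) with
    ⟨rfl, hb'⟩ | ⟨rfl, hb'⟩
  · exact absurd rfl hab
  · exact ⟨ha, hb, ha', hb'⟩
  · exact ⟨hb, ha, hb', ha'⟩
  · exact absurd rfl hab

end FanCenter

theorem BipGraph.not_admitsFanPlanar_of_mem_X (G : BipGraph V) {v : V} {S : Set V}
    (hv : v ∈ G.X) (hS : S ⊆ G.nbhd v) (hcard : 5 ≤ S.ncard)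
    (hdeg : ∀ u ∈ S, 3 ≤ G.deg u) : ¬ AdmitsFanPlanar G := by
  classical
  rintro ⟨px, py, ⟨hpx, hpy⟩, hF⟩
  have hSE : ∀ u ∈ S, (v, u) ∈ G.E := fun u hu => G.mem_E_of_adj_of_mem_X hv (hS hu)
  obtain ⟨g, hgS, hg⟩ :=
    Set.exists_strictMono_comp_of_le_ncard (hpy.mono fun u hu => G.mem_snd _ (hSE u hu)) hcard
  have hgE : ∀ i, (v, g i) ∈ G.E := fun i => hSE _ (hgS i)
  have hgY : ∀ i, g i ∈ G.Y := fun i => G.mem_snd _ (hgE i)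
  obtain ⟨cL, hL⟩ := hF _ (hgE 0)
  obtain ⟨cR, hR⟩ := hF _ (hgE 4)
  have hcenters : ∀ i ∈ Finset.Ioo (0 : Fin 5) 4, g i ≠ cL → g i ≠ cR →
      (cL, g i) ∈ G.E ∧ (cR, g i) ∈ G.E ∧ px cL < px v ∧ px v < px cR := fun i hi hiL hiR =>
    have ⟨h0, h4⟩ := Finset.mem_Ioo.1 hi
    adj_centers_of_between hpx hv hL hR (hg h0) (hg h4) hiL hiR (hgY i) (hdeg _ (hgS i))
  -- three middle vertices against at most two centres
  obtain ⟨_, hn, hnc⟩ := Finset.exists_mem_notMem_of_card_lt_card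
    (s := {cL, cR}) (t := (Finset.Ioo (0 : Fin 5) 4).image g) <| by
      rw [Finset.card_image_of_injective _ hg.injective.of_comp]
      exact Finset.card_le_two.trans_lt (by decide)
  obtain ⟨i, hi, rfl⟩ := Finset.mem_image.1 hn
  obtain ⟨hiL, hiR⟩ : g i ≠ cL ∧ g i ≠ cR := by simpa only [Finset.mem_insert,
    Finset.mem_singleton, not_or] using hnc
  obtain ⟨hLi, hRi, -⟩ := hcenters i hi hiL hiR
  have hne : ∀ j, g j ≠ cL ∧ g j ≠ cR := fun j =>
    ⟨(G.ne_of_mem_X_of_mem_Y (G.mem_fst _ hLi) (hgY j)).symm,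
      (G.ne_of_mem_X_of_mem_Y (G.mem_fst _ hRi) (hgY j)).symm⟩
  obtain ⟨-, hR1, -, hvR⟩ := hcenters 1 (by decide) (hne 1).1 (hne 1).2
  obtain ⟨hL2, -, hLv, -⟩ := hcenters 2 (by decide) (hne 2).1 (hne 2).2
  rcases hF.fst_eq_or_snd_eq hL2 (hgE 0) hR1 (Or.inl ⟨hLv, hg (by decide)⟩)
      (Or.inl ⟨hLv.trans hvR, hg (by decide)⟩) with h | h
  · exact hvR.ne (congrArg px h)
  · exact absurd h (hg.injective.of_comp.ne (by decide))

/-- A vertex with at least five neighbors of degree at least 3 forbids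
a 2-layer fan-planar drawing. -/
theorem stmt2 (G : BipGraph V) (v : V) (S : Set V) (hS : S ⊆ G.nbhd v)
    (hcard : 5 ≤ S.ncard) (hdeg : ∀ u ∈ S, 3 ≤ G.deg u) :
    ¬ AdmitsFanPlanar G := by
  obtain ⟨u, hu⟩ := Set.nonempty_of_ncard_ne_zero (by omega : S.ncard ≠ 0)
  rcases (hS hu).imp (G.mem_fst _) (G.mem_snd _) with hv | hv
  · exact G.not_admitsFanPlanar_of_mem_X hv hS hcard hdeg
  · refine fun hG => G.swap.not_admitsFanPlanar_of_mem_X hv (G.swap_nbhd v ▸ hS) hcard ?_ hG.swap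
    simpa only [BipGraph.swap_deg] using hdeg
end

section
/- Let G be a bipartite graph with a vertex v that has at least five degree-2 neighbors u_1, …, u_5 such that the graph G − v contains a matching saturating {u_1, …, u_5}. Then G admits no 2-layer fan-planar drawing. -/
variable {V : Type*}

/-- Flip the two layers of a bipartite graph. -/
def BipGraph.flip (G : BipGraph V) : BipGraph V where
  X := G.Y
  Y := G.X
  disj := G.disj.symm
  E := {e | (e.2, e.1) ∈ G.E}
  mem_fst := fun e he => G.mem_snd _ he
  mem_snd := fun e he => G.mem_fst _ he

lemma flip_fanPlanar {G : BipGraph V} {px py : V → ℝ} (h : FanPlanar G px py) :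
    FanPlanar G.flip py px := by
  intro e he
  obtain ⟨c, hc⟩ := h (e.2, e.1) he
  refine ⟨c, fun f hf hcross => ?_⟩
  have : Cross px py (e.2, e.1) (f.2, f.1) := by
    unfold Cross at hcross ⊢; dsimp at hcross ⊢; tauto
  have := hc (f.2, f.1) hf this
  dsimp at this; tauto

lemma helper {G : BipGraph V} {px py : V → ℝ} (hFP : FanPlanar G px py)
    {e f f' : V × V} (he : e ∈ G.E) (hf : f ∈ G.E) (hf' : f' ∈ G.E)
    (h1 : Cross px py e f) (h2 : Cross px py e f')
    (d1 : f.1 ≠ f'.1) (d2 : f.2 ≠ f'.2) (d3 : f.1 ≠ f'.2) (d4 : f'.1 ≠ f.2) : False := by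
  obtain ⟨c, hc⟩ := hFP e he
  rcases hc f hf h1 with h | h <;> rcases hc f' hf' h2 with h' | h'
  · exact d1 (h.trans h'.symm)
  · exact d3 (h.trans h'.symm)
  · exact d4 (h'.trans h.symm)
  · exact d2 (h.trans h'.symm)

lemma max3 {x y z : ℝ} (h1 : x ≠ y) (h2 : x ≠ z) (h3 : y ≠ z) :
    (y < x ∧ z < x) ∨ (x < y ∧ z < y) ∨ (x < z ∧ y < z) := by
  rcases h1.lt_or_gt with h | h
  · rcases h3.lt_or_gt with h' | h'
    · exact Or.inr (Or.inr ⟨h.trans h', h'⟩)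
    · exact Or.inr (Or.inl ⟨h, h'⟩)
  · rcases h2.lt_or_gt with h' | h'
    · exact Or.inr (Or.inr ⟨h', h.trans h'⟩)
    · exact Or.inl ⟨h, h'⟩

lemma min3 {x y z : ℝ} (h1 : x ≠ y) (h2 : x ≠ z) (h3 : y ≠ z) :
    (x < y ∧ x < z) ∨ (y < x ∧ y < z) ∨ (z < x ∧ z < y) := by
  rcases h1.lt_or_gt with h | h
  · rcases h2.lt_or_gt with h' | h'
    · exact Or.inl ⟨h, h'⟩
    · exact Or.inr (Or.inr ⟨h', h'.trans h⟩)
  · rcases h3.lt_or_gt with h' | h'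
    · exact Or.inr (Or.inl ⟨h, h'⟩)
    · exact Or.inr (Or.inr ⟨h'.trans h, h'⟩)

lemma key (G : BipGraph V) (px py : V → ℝ) (hD : IsDrawing G px py) (hFP : FanPlanar G px py)
    (v : V) (u w : Fin 5 → V)
    (hu_inj : Function.Injective u) (hw_inj : Function.Injective w) (hwv : ∀ i, w i ≠ v)
    (he : ∀ i, (v, u i) ∈ G.E) (hf : ∀ i, (w i, u i) ∈ G.E) : False := by
  have hvX : v ∈ G.X := G.mem_fst _ (he 0)
  have huY : ∀ i, u i ∈ G.Y := fun i => G.mem_snd _ (he i)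
  have hwX : ∀ i, w i ∈ G.X := fun i => G.mem_fst _ (hf i)
  have hwu : ∀ i j, w i ≠ u j := fun i j h =>
    Set.disjoint_left.mp G.disj (hwX i) (h ▸ huY j)
  have hpw : ∀ i, px (w i) ≠ px v := fun i h => hwv i (hD.1 (hwX i) hvX h)
  have hpy : ∀ i j, i ≠ j → py (u i) ≠ py (u j) := fun i j hij h =>
    hij (hu_inj (hD.2 (huY i) (huY j) h))
  have hcard := Finset.card_filter_add_card_filter_not
    (s := (Finset.univ : Finset (Fin 5))) (p := fun i => px v < px (w i))
  have h3 : 2 < (Finset.univ.filter (fun i : Fin 5 => px v < px (w i))).card ∨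
      2 < (Finset.univ.filter (fun i : Fin 5 => ¬ px v < px (w i))).card := by
    rw [Finset.card_univ] at hcard
    simp only [Fintype.card_fin] at hcard
    omega
  rcases h3 with h3 | h3
  · obtain ⟨a, b, c, ha, hb, hc, hab, hac, hbc⟩ := Finset.two_lt_card_iff.mp h3
    simp only [Finset.mem_filter, Finset.mem_univ, true_and] at ha hb hc
    rcases max3 (hpy a b hab) (hpy a c hac) (hpy b c hbc) with ⟨p1, p2⟩ | ⟨p1, p2⟩ | ⟨p1, p2⟩
    · exact helper hFP (he a) (hf b) (hf c) (Or.inl ⟨hb, p1⟩) (Or.inl ⟨hc, p2⟩)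
        (fun h => hbc (hw_inj h)) (fun h => hbc (hu_inj h)) (hwu b c) (hwu c b)
    · exact helper hFP (he b) (hf a) (hf c) (Or.inl ⟨ha, p1⟩) (Or.inl ⟨hc, p2⟩)
        (fun h => hac (hw_inj h)) (fun h => hac (hu_inj h)) (hwu a c) (hwu c a)
    · exact helper hFP (he c) (hf a) (hf b) (Or.inl ⟨ha, p1⟩) (Or.inl ⟨hb, p2⟩)
        (fun h => hab (hw_inj h)) (fun h => hab (hu_inj h)) (hwu a b) (hwu b a)
  · obtain ⟨a, b, c, ha, hb, hc, hab, hac, hbc⟩ := Finset.two_lt_card_iff.mp h3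
    simp only [Finset.mem_filter, Finset.mem_univ, true_and, not_lt] at ha hb hc
    have ha' : px (w a) < px v := lt_of_le_of_ne ha (hpw a)
    have hb' : px (w b) < px v := lt_of_le_of_ne hb (hpw b)
    have hc' : px (w c) < px v := lt_of_le_of_ne hc (hpw c)
    rcases min3 (hpy a b hab) (hpy a c hac) (hpy b c hbc) with ⟨p1, p2⟩ | ⟨p1, p2⟩ | ⟨p1, p2⟩
    · exact helper hFP (he a) (hf b) (hf c) (Or.inr ⟨hb', p1⟩) (Or.inr ⟨hc', p2⟩)
        (fun h => hbc (hw_inj h)) (fun h => hbc (hu_inj h)) (hwu b c) (hwu c b)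
    · exact helper hFP (he b) (hf a) (hf c) (Or.inr ⟨ha', p1⟩) (Or.inr ⟨hc', p2⟩)
        (fun h => hac (hw_inj h)) (fun h => hac (hu_inj h)) (hwu a c) (hwu c a)
    · exact helper hFP (he c) (hf a) (hf b) (Or.inr ⟨ha', p1⟩) (Or.inr ⟨hb', p2⟩)
        (fun h => hab (hw_inj h)) (fun h => hab (hu_inj h)) (hwu a b) (hwu b a)

/-- A vertex with five degree-2 neighbors that are saturated by a matching in `G - v`
forbids a 2-layer fan-planar drawing. -/
theorem stmt3 (G : BipGraph V) (v : V) (u w : Fin 5 → V)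
    (hu_inj : Function.Injective u) (hu_nb : ∀ i, u i ∈ G.nbhd v)
    (hdeg : ∀ i, G.deg (u i) = 2)
    (hw_inj : Function.Injective w) (hwv : ∀ i, w i ≠ v)
    (huw : ∀ i j, u i ≠ w j)
    (hmatch : ∀ i, (G.deleteVert v).Adj (u i) (w i)) :
    ¬ AdmitsFanPlanar G := by
  rintro ⟨px, py, hD, hFP⟩
  rcases hu_nb 0 with h0 | h0
  · -- v ∈ X
    have hvX : v ∈ G.X := G.mem_fst _ h0
    have he : ∀ i, (v, u i) ∈ G.E := by
      intro i
      rcases hu_nb i with h | h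
      · exact h
      · exact absurd (G.mem_snd _ h) (Set.disjoint_left.mp G.disj hvX)
    have huY : ∀ i, u i ∈ G.Y := fun i => G.mem_snd _ (he i)
    have hf : ∀ i, (w i, u i) ∈ G.E := by
      intro i
      rcases hmatch i with h | h
      · exact absurd (G.mem_fst _ h.1) fun hx =>
          Set.disjoint_left.mp G.disj hx (huY i)
      · exact h.1
    exact key G px py hD hFP v u w hu_inj hw_inj hwv he hf
  · -- v ∈ Y, use the flipped graph
    have hvY : v ∈ G.Y := G.mem_snd _ h0
    have he : ∀ i, (u i, v) ∈ G.E := by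
      intro i
      rcases hu_nb i with h | h
      · exact absurd (G.mem_snd _ h) fun hy =>
          Set.disjoint_left.mp G.disj (G.mem_fst _ h) hvY
      · exact h
    have huX : ∀ i, u i ∈ G.X := fun i => G.mem_fst _ (he i)
    have hf : ∀ i, (u i, w i) ∈ G.E := by
      intro i
      rcases hmatch i with h | h
      · exact h.1
      · exact absurd (G.mem_snd _ h.1) (Set.disjoint_left.mp G.disj (huX i))
    exact key G.flip py px ⟨hD.2, hD.1⟩ (flip_fanPlanar hFP) v u w hu_inj hw_inj hwv he hf
end

section
/- In any 2-layer fan-planar drawing of a bipartite graph G without isolated vertices, if v, w ∈ X and there exist two vertices u_1, u_2 ∈ Y with N(u_1) = N(u_2) = {v, w}, then v and w appear consecutively in the linear order on X (no other vertex of X lies between them). -/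
variable {V : Type*}

lemma key_between (G : BipGraph V) (px py : V → ℝ) (hfan : FanPlanar G px py)
    (v w x y u₁ u₂ : V)
    (he1 : (v, u₁) ∈ G.E) (he2 : (v, u₂) ∈ G.E)
    (he3 : (w, u₁) ∈ G.E) (he4 : (w, u₂) ∈ G.E)
    (hexy : (x, y) ∈ G.E)
    (hvx : px v < px x) (hxw : px x < px w)
    (hu : py u₁ < py u₂) (hy1 : py y ≠ py u₁) (hy2 : py y ≠ py u₂) : False := by
  have hvX := G.mem_fst _ he1
  have hwX := G.mem_fst _ he3
  have hxX := G.mem_fst _ hexy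
  have hu1Y := G.mem_snd _ he1
  have hu2Y := G.mem_snd _ he2
  have hyY := G.mem_snd _ hexy
  have hne : ∀ a ∈ G.X, ∀ b ∈ G.Y, a ≠ b := by
    intro a ha b hb hab
    exact (Set.disjoint_left.mp G.disj ha) (hab ▸ hb)
  have hxw' : x ≠ w := fun h => ne_of_lt hxw (congrArg px h)
  have hvx' : v ≠ x := fun h => ne_of_lt hvx (congrArg px h)
  have hvw' : v ≠ w := fun h => ne_of_lt (lt_trans hvx hxw) (congrArg px h)
  have hyu1' : y ≠ u₁ := fun h => hy1 (congrArg py h)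
  have hyu2' : y ≠ u₂ := fun h => hy2 (congrArg py h)
  have hu12' : u₁ ≠ u₂ := fun h => ne_of_lt hu (congrArg py h)
  rcases lt_trichotomy (py y) (py u₁) with hlt | heq | hgt
  · -- base edge (v,u₂), crossers (x,y) and (w,u₁)
    obtain ⟨c, hc⟩ := hfan (v, u₂) he2
    have A := hc (x, y) hexy (Or.inl ⟨hvx, lt_trans hlt hu⟩)
    have B := hc (w, u₁) he3 (Or.inl ⟨lt_trans hvx hxw, hu⟩)
    simp only at A B
    rcases A with hA | hA <;> rcases B with hB | hB
    · exact hxw' (hA.trans hB.symm)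
    · exact hne x hxX u₁ hu1Y (hA.trans hB.symm)
    · exact (hne w hwX y hyY) (hB.trans hA.symm)
    · exact hyu1' (hA.trans hB.symm)
  · exact hy1 heq
  · rcases lt_trichotomy (py y) (py u₂) with hlt2 | heq2 | hgt2
    · -- base edge (x,y), crossers (w,u₁) and (v,u₂)
      obtain ⟨c, hc⟩ := hfan (x, y) hexy
      have A := hc (w, u₁) he3 (Or.inl ⟨hxw, hgt⟩)
      have B := hc (v, u₂) he2 (Or.inr ⟨hvx, hlt2⟩)
      simp only at A B
      rcases A with hA | hA <;> rcases B with hB | hB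
      · exact hvw' (hB.trans hA.symm)
      · exact hne w hwX u₂ hu2Y (hA.trans hB.symm)
      · exact (hne v hvX u₁ hu1Y) (hB.trans hA.symm)
      · exact hu12' (hA.trans hB.symm)
    · exact hy2 heq2
    · -- base edge (w,u₁), crossers (x,y) and (v,u₂)
      obtain ⟨c, hc⟩ := hfan (w, u₁) he3
      have A := hc (x, y) hexy (Or.inr ⟨hxw, hgt⟩)
      have B := hc (v, u₂) he2 (Or.inr ⟨lt_trans hvx hxw, hu⟩)
      simp only at A B
      rcases A with hA | hA <;> rcases B with hB | hB
      · exact hvx' (hB.trans hA.symm)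
      · exact hne x hxX u₂ hu2Y (hA.trans hB.symm)
      · exact (hne v hvX y hyY) (hB.trans hA.symm)
      · exact hyu2' (hA.trans hB.symm)

/-- In a 2-layer fan-planar drawing, two vertices `v, w ∈ X` with two common
degree-2 neighbors appear consecutively on `X`. -/
theorem stmt5 (G : BipGraph V) (hiso : NoIsolated G) (px py : V → ℝ)
    (hD : IsDrawing G px py) (hfan : FanPlanar G px py)
    (v w : V) (hv : v ∈ G.X) (hw : w ∈ G.X) (hvw : v ≠ w)
    (u₁ u₂ : V) (h1 : u₁ ∈ G.Y) (h2 : u₂ ∈ G.Y) (h12 : u₁ ≠ u₂)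
    (hN1 : G.nbhd u₁ = {v, w}) (hN2 : G.nbhd u₂ = {v, w}) :
    ∀ x ∈ G.X, ¬ ((px v < px x ∧ px x < px w) ∨ (px w < px x ∧ px x < px v)) := by
  -- extract the four edges
  have edge_of : ∀ u ∈ G.Y, ∀ z, z ∈ G.nbhd u → (z, u) ∈ G.E := by
    intro u hu z hz
    rcases hz with h | h
    · exact absurd (G.mem_fst _ h) (fun hX => (Set.disjoint_left.mp G.disj hX) hu)
    · exact h
  have hv1 : (v, u₁) ∈ G.E := edge_of u₁ h1 v (hN1 ▸ Set.mem_insert _ _)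
  have hw1 : (w, u₁) ∈ G.E := edge_of u₁ h1 w (hN1 ▸ Set.mem_insert_of_mem _ rfl)
  have hv2 : (v, u₂) ∈ G.E := edge_of u₂ h2 v (hN2 ▸ Set.mem_insert _ _)
  have hw2 : (w, u₂) ∈ G.E := edge_of u₂ h2 w (hN2 ▸ Set.mem_insert_of_mem _ rfl)
  intro x hx hbad
  -- x has a neighbor y
  obtain ⟨y, hy⟩ := hiso x (Or.inl hx)
  have hexy : (x, y) ∈ G.E := by
    rcases hy with h | h
    · exact h
    · exact absurd (G.mem_fst _ h) (fun hY' =>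
        (Set.disjoint_left.mp G.disj hx) (G.mem_snd _ h))
  have hyY : y ∈ G.Y := G.mem_snd _ hexy
  -- x ≠ v and x ≠ w
  have hxv : x ≠ v := by rintro rfl; rcases hbad with ⟨h, _⟩ | ⟨_, h⟩ <;> exact lt_irrefl _ h
  have hxw : x ≠ w := by rintro rfl; rcases hbad with ⟨_, h⟩ | ⟨h, _⟩ <;> exact lt_irrefl _ h
  -- y ≠ u₁, y ≠ u₂
  have hyu1 : y ≠ u₁ := by
    rintro rfl
    have : x ∈ G.nbhd y := Or.inr hexy
    rw [hN1] at this
    rcases this with h | h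
    · exact hxv h
    · exact hxw h
  have hyu2 : y ≠ u₂ := by
    rintro rfl
    have : x ∈ G.nbhd y := Or.inr hexy
    rw [hN2] at this
    rcases this with h | h
    · exact hxv h
    · exact hxw h
  have hpy1 : py y ≠ py u₁ := fun h => hyu1 (hD.2 hyY h1 h)
  have hpy2 : py y ≠ py u₂ := fun h => hyu2 (hD.2 hyY h2 h)
  have hpu : py u₁ ≠ py u₂ := fun h => h12 (hD.2 h1 h2 h)
  rcases hbad with ⟨ha, hb⟩ | ⟨ha, hb⟩ <;> rcases lt_or_gt_of_ne hpu with hu | hu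
  · exact key_between G px py hfan v w x y u₁ u₂ hv1 hv2 hw1 hw2 hexy ha hb hu hpy1 hpy2
  · exact key_between G px py hfan v w x y u₂ u₁ hv2 hv1 hw2 hw1 hexy ha hb hu hpy2 hpy1
  · exact key_between G px py hfan w v x y u₁ u₂ hw1 hw2 hv1 hv2 hexy ha hb hu hpy1 hpy2
  · exact key_between G px py hfan w v x y u₂ u₁ hw2 hw1 hv2 hv1 hexy ha hb hu hpy2 hpy1
end

section
/- Let G be a bipartite graph with a vertex v in X that has degree-2 neighbors u_1, …, u_5 each matched in G − v to distinct vertices w_1, …, w_5 by a matching, with u_1 <_Y ⋯ <_Y u_5 in a 2-layer drawing D, and suppose w_3 <_X v. Then D contains a violating triple; in particular, D is not fan-planar. -/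
variable {V : Type*}

/-- Five degree-2 neighbors of `v` matched to distinct vertices, ordered on `Y`,
with `w₃` to the left of `v`, force a violating triple. -/
theorem stmt8 (G : BipGraph V) (px py : V → ℝ) (hD : IsDrawing G px py)
    (v : V) (hv : v ∈ G.X) (u w : Fin 5 → V)
    (hw_inj : Function.Injective w) (hwv : ∀ i, w i ≠ v)
    (hN : ∀ i, G.nbhd (u i) = {v, w i})
    (hev : ∀ i, (v, u i) ∈ G.E) (hew : ∀ i, (w i, u i) ∈ G.E)
    (hord : ∀ i j : Fin 5, i < j → py (u i) < py (u j))
    (hw3 : px (w 2) < px v) :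
    ∃ e f f' : V × V, ViolatingTriple G px py e f f' := by
  have hpxw : ∀ j, px (w j) ≠ px v := fun j h =>
    hwv j (hD.1 (G.mem_fst _ (hew j)) hv h)
  have hune : ∀ i j : Fin 5, i < j → u i ≠ u j := fun i j hij h =>
    absurd (hord i j hij) (by rw [h]; exact lt_irrefl _)
  -- Build a triple (v, u 0), (w j, u j), (w k, u k) when w j, w k are left of v.
  have left : ∀ j k : Fin 5, 0 < j → j < k → px (w j) < px v → px (w k) < px v →
      ∃ e f f' : V × V, ViolatingTriple G px py e f f' := by
    intro j k h0j hjk hj hk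
    refine ⟨(v, u 0), (w j, u j), (w k, u k), hev 0, hew j, hew k,
      Or.inr ⟨hj, hord 0 j h0j⟩, Or.inr ⟨hk, hord 0 k (h0j.trans hjk)⟩,
      fun h => hwv j h.symm, fun h => hwv k h.symm,
      fun h => (Fin.lt_iff_le_and_ne.mp hjk).2 (hw_inj h),
      hune 0 j h0j, hune 0 k (h0j.trans hjk), hune j k hjk⟩
  -- Build a triple (v, u 4), (w j, u j), (w k, u k) when w j, w k are right of v.
  have right : ∀ j k : Fin 5, j < k → k < 4 → px v < px (w j) → px v < px (w k) →
      ∃ e f f' : V × V, ViolatingTriple G px py e f f' := by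
    intro j k hjk hk4 hj hk
    refine ⟨(v, u 4), (w j, u j), (w k, u k), hev 4, hew j, hew k,
      Or.inl ⟨hj, hord j 4 (hjk.trans hk4)⟩, Or.inl ⟨hk, hord k 4 hk4⟩,
      fun h => hwv j h.symm, fun h => hwv k h.symm,
      fun h => (Fin.lt_iff_le_and_ne.mp hjk).2 (hw_inj h),
      (hune j 4 (hjk.trans hk4)).symm, (hune k 4 hk4).symm, hune j k hjk⟩
  rcases lt_or_gt_of_ne (hpxw 1) with h1 | h1
  · exact left 1 2 (by decide) (by decide) h1 hw3
  rcases lt_or_gt_of_ne (hpxw 3) with h3 | h3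
  · exact left 2 3 (by decide) (by decide) hw3 h3
  rcases lt_or_gt_of_ne (hpxw 4) with h4 | h4
  · exact left 2 4 (by decide) (by decide) hw3 h4
  · exact right 1 3 (by decide) (by decide) h1 h3
end

section
/- Let v be a vertex in X with five neighbors u_1 <_Y u_2 <_Y u_3 <_Y u_4 <_Y u_5 in a 2-layer drawing D of a bipartite graph G. Suppose u_3 has a neighbor w ≠ v with w <_X v, and u_2 has a neighbor w' ∉ {v, w}. Then D contains a violating triple. -/
variable {V : Type*}

/-- Five ordered neighbors of `v`, with `u₃` adjacent to some `w ≠ v` left of `v`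
and `u₂` adjacent to some `w' ∉ {v, w}`, force a violating triple. -/
theorem stmt9 (G : BipGraph V) (px py : V → ℝ) (hD : IsDrawing G px py)
    (v w w' : V) (hv : v ∈ G.X) (u : Fin 5 → V) (hu : ∀ i, u i ∈ G.Y)
    (hev : ∀ i, (v, u i) ∈ G.E)
    (hord : ∀ i j : Fin 5, i < j → py (u i) < py (u j))
    (hwv : w ≠ v) (hew : (w, u 2) ∈ G.E) (hwx : px w < px v)
    (hw'v : w' ≠ v) (hw'w : w' ≠ w) (hew' : (w', u 1) ∈ G.E) :
    ∃ e f f' : V × V, ViolatingTriple G px py e f f' := by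
  have hw'X : w' ∈ G.X := G.mem_fst _ hew'
  have hne : px w' ≠ px v := fun h => hw'v (hD.1 hw'X hv h)
  have h01 := hord 0 1 (by decide)
  have h02 := hord 0 2 (by decide)
  have h12 := hord 1 2 (by decide)
  have h13 := hord 1 3 (by decide)
  have h23 := hord 2 3 (by decide)
  rcases lt_or_gt_of_ne hne with h | h
  · refine ⟨(v, u 0), (w, u 2), (w', u 1),
      hev 0, hew, hew', Or.inr ⟨hwx, h02⟩, Or.inr ⟨h, h01⟩,
      hwv.symm, hw'v.symm, fun e => hw'w (e.symm), ne_of_apply_ne py h02.ne, ne_of_apply_ne py h01.ne, ne_of_apply_ne py h12.ne'⟩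
  · refine ⟨(w', u 1), (w, u 2), (v, u 3),
      hew', hew, hev 3, Or.inr ⟨hwx.trans h, h12⟩, Or.inr ⟨h, h13⟩,
      hw'w, hw'v, hwv, ne_of_apply_ne py h12.ne, ne_of_apply_ne py h13.ne, ne_of_apply_ne py h23.ne⟩
end

section
/- Let D be a 2-layer fan-planar drawing of a bipartite graph G without isolated vertices, with v, w ∈ X, w <_X v, and u_1, u_2 ∈ Y with u_1 <_Y u_2 and N(u_1) = N(u_2) = {v, w}. Then no vertex u' of Y with u_1 <_Y u' <_Y u_2 has a neighbor outside {v, w}. -/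
variable {V : Type*}

lemma BipGraph.mem_E_of_nbhd (G : BipGraph V) {a y : V} (hy : y ∈ G.Y) (ha : a ∈ G.nbhd y) :
    (a, y) ∈ G.E := by
  rcases ha with h | h
  · exact absurd rfl (G.disj.ne_of_mem (G.mem_fst _ h) hy)
  · exact h

/-- In a 2-layer fan-planar drawing, no vertex between two common degree-2
neighbors of `v` and `w` has a neighbor outside `{v, w}`. -/
theorem stmt12 (G : BipGraph V) (hiso : NoIsolated G) (px py : V → ℝ)
    (hD : IsDrawing G px py) (hfan : FanPlanar G px py)
    (v w : V) (hv : v ∈ G.X) (hw : w ∈ G.X) (hwv : px w < px v)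
    (u₁ u₂ : V) (h1 : u₁ ∈ G.Y) (h2 : u₂ ∈ G.Y) (h12 : py u₁ < py u₂)
    (hN1 : G.nbhd u₁ = {v, w}) (hN2 : G.nbhd u₂ = {v, w}) :
    ∀ u' ∈ G.Y, py u₁ < py u' → py u' < py u₂ → G.nbhd u' ⊆ {v, w} := by
  intro u' hu' h1' h2' z hz
  by_contra hzvw
  have hne_v : z ≠ v := fun h => hzvw (by simp [h])
  have hne_w : z ≠ w := fun h => hzvw (by simp [h])
  have hze : (z, u') ∈ G.E := G.mem_E_of_nbhd hu' hz
  have hzX : z ∈ G.X := G.mem_fst _ hze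
  have hvu1 : (v, u₁) ∈ G.E := G.mem_E_of_nbhd h1 (by rw [hN1]; simp)
  have hwu2 : (w, u₂) ∈ G.E := G.mem_E_of_nbhd h2 (by rw [hN2]; simp)
  have hXY : ∀ a ∈ G.X, ∀ b ∈ G.Y, a ≠ b := fun a ha b hb => G.disj.ne_of_mem ha hb
  have hzw : px z ≠ px w := fun h => hne_w (hD.1 hzX hw h)
  have hzv : px z ≠ px v := fun h => hne_v (hD.1 hzX hv h)
  rcases lt_trichotomy (px z) (px w) with hA | hA | hA
  · -- z left of w: apply fan-planarity to (v, u₁)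
    obtain ⟨c, hc'⟩ := hfan (v, u₁) hvu1
    have H1 := hc' (z, u') hze (Or.inr ⟨lt_trans hA hwv, h1'⟩)
    have H2 := hc' (w, u₂) hwu2 (Or.inr ⟨hwv, h12⟩)
    simp only at H1 H2
    rcases H1 with h | h <;> rcases H2 with h' | h' <;> rw [← h'] at h
    · exact hne_w h
    · exact hXY z hzX u₂ h2 h
    · exact hXY w hw u' hu' h.symm
    · exact ne_of_lt h2' (by rw [h])
  · exact hzw hA
  · rcases lt_trichotomy (px z) (px v) with hB | hB | hB
    · -- w < z < v: apply fan-planarity to (z, u')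
      obtain ⟨c, hc'⟩ := hfan (z, u') hze
      have H1 := hc' (v, u₁) hvu1 (Or.inl ⟨hB, h1'⟩)
      have H2 := hc' (w, u₂) hwu2 (Or.inr ⟨hA, h2'⟩)
      simp only at H1 H2
      rcases H1 with h | h <;> rcases H2 with h' | h' <;> rw [← h'] at h
      · exact ne_of_lt hwv (by rw [h])
      · exact hXY v hv u₂ h2 h
      · exact hXY w hw u₁ h1 h.symm
      · exact ne_of_lt h12 (by rw [h])
    · exact hzv hB
    · -- v < z: apply fan-planarity to (w, u₂)
      obtain ⟨c, hc'⟩ := hfan (w, u₂) hwu2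
      have H1 := hc' (z, u') hze (Or.inl ⟨lt_trans hwv hB, h2'⟩)
      have H2 := hc' (v, u₁) hvu1 (Or.inl ⟨hwv, h12⟩)
      simp only at H1 H2
      rcases H1 with h | h <;> rcases H2 with h' | h' <;> rw [← h'] at h
      · exact hne_v h
      · exact hXY z hzX u₁ h1 h
      · exact hXY v hv u' hu' h.symm
      · exact ne_of_lt h1' (by rw [h])
end

section
/- Let D be a 2-layer fan-planar drawing of a bipartite graph G without isolated vertices, with v, w ∈ X, w <_X v, and u_1, u_2 ∈ Y with u_1 <_Y u_2 and N(u_1) = N(u_2) = {v, w}. Then there is no edge {u', w'} of G with u' ∈ Y, w' ∈ X satisfying either (u' <_Y u_1 and v <_X w') or (u_2 <_Y u' and w' <_X w). -/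
variable {V : Type*}

lemma edge_of_adj (G : BipGraph V) {y x : V} (hy : y ∈ G.Y) (h : G.Adj y x) :
    (x, y) ∈ G.E := by
  rcases h with h | h
  · exact absurd (G.mem_fst _ h) (fun hx => (Set.disjoint_left.mp G.disj hx hy).elim)
  · exact h

/-- In a 2-layer fan-planar drawing with two common neighbors `u₁ <_Y u₂` of
`w <_X v`, there is no edge `{u', w'}` with `u' <_Y u₁ ∧ v <_X w'` or
`u₂ <_Y u' ∧ w' <_X w`. -/
theorem stmt13 (G : BipGraph V) (hiso : NoIsolated G) (px py : V → ℝ)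
    (hD : IsDrawing G px py) (hfan : FanPlanar G px py)
    (v w : V) (hv : v ∈ G.X) (hw : w ∈ G.X) (hwv : px w < px v)
    (u₁ u₂ : V) (h1 : u₁ ∈ G.Y) (h2 : u₂ ∈ G.Y) (h12 : py u₁ < py u₂)
    (hN1 : G.nbhd u₁ = {v, w}) (hN2 : G.nbhd u₂ = {v, w}) :
    ¬ ∃ u' ∈ G.Y, ∃ w' ∈ G.X, G.Adj u' w' ∧
      ((py u' < py u₁ ∧ px v < px w') ∨ (py u₂ < py u' ∧ px w' < px w)) := by
  -- basic edges
  have hvu1 : (v, u₁) ∈ G.E := edge_of_adj G h1 (show v ∈ G.nbhd u₁ by rw [hN1]; left; rfl)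
  have hwu1 : (w, u₁) ∈ G.E := edge_of_adj G h1 (show w ∈ G.nbhd u₁ by rw [hN1]; right; rfl)
  have hvu2 : (v, u₂) ∈ G.E := edge_of_adj G h2 (show v ∈ G.nbhd u₂ by rw [hN2]; left; rfl)
  have hwu2 : (w, u₂) ∈ G.E := edge_of_adj G h2 (show w ∈ G.nbhd u₂ by rw [hN2]; right; rfl)
  rintro ⟨u', hu', w', hw', hadj, hcase⟩
  have hedge : (w', u') ∈ G.E := edge_of_adj G hu' hadj
  have hdisj := Set.disjoint_left.mp G.disj
  rcases hcase with ⟨hy, hx⟩ | ⟨hy, hx⟩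
  · -- e = (w, u₂), crossed by (w', u') and (v, u₁)
    obtain ⟨c, hc⟩ := hfan (w, u₂) hwu2
    have c1 := hc (w', u') hedge (Or.inl ⟨lt_trans hwv hx, lt_trans hy h12⟩)
    have c2 := hc (v, u₁) hvu1 (Or.inl ⟨hwv, h12⟩)
    have c1' : w' = c ∨ u' = c := c1
    have c2' : v = c ∨ u₁ = c := c2
    rcases c1' with rfl | rfl <;> rcases c2' with h | h
    · exact absurd (h ▸ hx) (lt_irrefl _)
    · exact hdisj hw' (h ▸ h1)
    · exact hdisj (h ▸ hv) hu'
    · exact absurd (h ▸ hy) (lt_irrefl _)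
  · -- e = (v, u₁), crossed by (w', u') and (w, u₂)
    obtain ⟨c, hc⟩ := hfan (v, u₁) hvu1
    have c1 := hc (w', u') hedge (Or.inr ⟨lt_trans hx hwv, lt_trans h12 hy⟩)
    have c2 := hc (w, u₂) hwu2 (Or.inr ⟨hwv, h12⟩)
    have c1' : w' = c ∨ u' = c := c1
    have c2' : w = c ∨ u₂ = c := c2
    rcases c1' with rfl | rfl <;> rcases c2' with h | h
    · exact absurd (h ▸ hx) (lt_irrefl _)
    · exact hdisj hw' (h ▸ h2)
    · exact hdisj (h ▸ hw) hu'
    · exact absurd (h ▸ hy) (lt_irrefl _)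
end

section
/- Let G be a bipartite graph admitting a 2-layer fan-planar drawing, and let v be a vertex of G. Then there are at most four vertices w ≠ v such that some vertex u of degree 2 satisfies N(u) = {v, w}. -/
variable {V : Type*}

/-- fan-planarity for an abstract edge set -/
def FP (px py : V → ℝ) (E : Set (V × V)) : Prop :=
  ∀ e ∈ E, ∃ c : V, ∀ f ∈ E, Cross px py e f → f.1 = c ∨ f.2 = c

lemma key_s15 {px py : V → ℝ} {E : Set (V × V)} (hfp : FP px py E)
    {v ua wb ub wc uc : V}
    (h1 : (v, ua) ∈ E) (h2 : (wb, ub) ∈ E) (h3 : (wc, uc) ∈ E)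
    (hcb : Cross px py (v, ua) (wb, ub)) (hcc : Cross px py (v, ua) (wc, uc))
    (d1 : wb ≠ wc) (d2 : ub ≠ uc) (d3 : wb ≠ uc) (d4 : wc ≠ ub) : False := by
  obtain ⟨c, hc⟩ := hfp _ h1
  rcases hc _ h2 hcb with hb | hb <;> rcases hc _ h3 hcc with hc' | hc' <;>
    simp_all

lemma tripleLeft {px py : V → ℝ} {E : Set (V × V)} (hfp : FP px py E)
    {v w1 w2 w3 u1 u2 u3 : V}
    (e1 : (v, u1) ∈ E) (e2 : (v, u2) ∈ E) (e3 : (v, u3) ∈ E)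
    (f1 : (w1, u1) ∈ E) (f2 : (w2, u2) ∈ E) (f3 : (w3, u3) ∈ E)
    (hw12 : w1 ≠ w2) (hw13 : w1 ≠ w3) (hw23 : w2 ≠ w3)
    (hu12 : u1 ≠ u2) (hu13 : u1 ≠ u3) (hu23 : u2 ≠ u3)
    (m12 : w1 ≠ u2) (m13 : w1 ≠ u3) (m21 : w2 ≠ u1) (m23 : w2 ≠ u3)
    (m31 : w3 ≠ u1) (m32 : w3 ≠ u2)
    (hx1 : px w1 < px v) (hx2 : px w2 < px v) (hx3 : px w3 < px v)
    (hy12 : py u1 ≠ py u2) (hy13 : py u1 ≠ py u3) (hy23 : py u2 ≠ py u3) :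
    False := by
  rcases lt_or_gt_of_ne hy12 with h12 | h12
  · rcases lt_or_gt_of_ne hy13 with h13 | h13
    · exact key_s15 hfp e1 f2 f3 (Or.inr ⟨hx2, h12⟩) (Or.inr ⟨hx3, h13⟩) hw23 hu23 m23 m32
    · exact key_s15 hfp e3 f1 f2 (Or.inr ⟨hx1, h13⟩) (Or.inr ⟨hx2, by linarith⟩)
        hw12 hu12 m12 m21
  · rcases lt_or_gt_of_ne hy23 with h23 | h23
    · exact key_s15 hfp e2 f1 f3 (Or.inr ⟨hx1, h12⟩) (Or.inr ⟨hx3, h23⟩) hw13 hu13 m13 m31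
    · exact key_s15 hfp e3 f1 f2 (Or.inr ⟨hx1, by linarith⟩) (Or.inr ⟨hx2, h23⟩)
        hw12 hu12 m12 m21

lemma cross_neg {px py : V → ℝ} {e f : V × V} :
    Cross (fun x => -px x) (fun y => -py y) e f ↔ Cross px py e f := by
  unfold Cross
  simp only [neg_lt_neg_iff]
  tauto

lemma tripleRight {px py : V → ℝ} {E : Set (V × V)} (hfp : FP px py E)
    {v w1 w2 w3 u1 u2 u3 : V}
    (e1 : (v, u1) ∈ E) (e2 : (v, u2) ∈ E) (e3 : (v, u3) ∈ E)
    (f1 : (w1, u1) ∈ E) (f2 : (w2, u2) ∈ E) (f3 : (w3, u3) ∈ E)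
    (hw12 : w1 ≠ w2) (hw13 : w1 ≠ w3) (hw23 : w2 ≠ w3)
    (hu12 : u1 ≠ u2) (hu13 : u1 ≠ u3) (hu23 : u2 ≠ u3)
    (m12 : w1 ≠ u2) (m13 : w1 ≠ u3) (m21 : w2 ≠ u1) (m23 : w2 ≠ u3)
    (m31 : w3 ≠ u1) (m32 : w3 ≠ u2)
    (hx1 : px v < px w1) (hx2 : px v < px w2) (hx3 : px v < px w3)
    (hy12 : py u1 ≠ py u2) (hy13 : py u1 ≠ py u3) (hy23 : py u2 ≠ py u3) :
    False := by
  have hfp' : FP (fun x => -px x) (fun y => -py y) E := by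
    intro e he
    obtain ⟨c, hc⟩ := hfp e he
    exact ⟨c, fun f hf hcr => hc f hf (cross_neg.mp hcr)⟩
  exact tripleLeft hfp' e1 e2 e3 f1 f2 f3 hw12 hw13 hw23 hu12 hu13 hu23
    m12 m13 m21 m23 m31 m32 (by simpa using hx1) (by simpa using hx2)
    (by simpa using hx3) (by simpa using hy12) (by simpa using hy13)
    (by simpa using hy23)

lemma nbhd_ne {N : V → Set V} {v w w' u u' : V} (hnb : N u = {v, w})
    (hnb' : N u' = {v, w'}) (hww' : w ≠ w') (hwv : w ≠ v) : u ≠ u' := by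
  intro h
  subst h
  rw [hnb] at hnb'
  have hw : w ∈ ({v, w'} : Set V) := hnb' ▸ (by right; rfl)
  rcases hw with h | h
  · exact hwv h
  · exact hww' h

lemma mainAux {px py : V → ℝ} {E : Set (V × V)} {X Y : Set V} (disj : Disjoint X Y)
    (hX : ∀ e ∈ E, e.1 ∈ X) (hY : ∀ e ∈ E, e.2 ∈ Y)
    (hpx : Set.InjOn px X) (hpy : Set.InjOn py Y)
    (hFP : FP px py E) (v : V) (hv : v ∈ X)
    (S : Set V) (N : V → Set V) (hSfin : S.Finite)
    (hvS : ∀ w ∈ S, w ≠ v)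
    (hdat : ∀ w ∈ S, ∃ u, (v, u) ∈ E ∧ (w, u) ∈ E ∧ N u = {v, w}) :
    S.ncard ≤ 4 := by
  have hwX : ∀ w ∈ S, w ∈ X := by
    intro w hw
    obtain ⟨u, _, hwu, _⟩ := hdat w hw
    exact hX _ hwu
  have hxne : ∀ w ∈ S, px w ≠ px v := fun w hw hx => hvS w hw (hpx (hwX w hw) hv hx)
  set L := {w ∈ S | px w < px v} with hLdef
  set R := {w ∈ S | px v < px w} with hRdef
  have hsub : S ⊆ L ∪ R := by
    intro w hw
    rcases lt_or_gt_of_ne (hxne w hw) with h | h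
    · exact Or.inl ⟨hw, h⟩
    · exact Or.inr ⟨hw, h⟩
  have hLS : L ⊆ S := fun x hx => hx.1
  have hRS : R ⊆ S := fun x hx => hx.1
  -- extraction of data for a triple of distinct elements of S, plus derived facts
  have triple : ∀ w1 ∈ S, ∀ w2 ∈ S, ∀ w3 ∈ S, w1 ≠ w2 → w1 ≠ w3 → w2 ≠ w3 →
      ∃ u1 u2 u3, (v, u1) ∈ E ∧ (v, u2) ∈ E ∧ (v, u3) ∈ E ∧
        (w1, u1) ∈ E ∧ (w2, u2) ∈ E ∧ (w3, u3) ∈ E ∧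
        u1 ≠ u2 ∧ u1 ≠ u3 ∧ u2 ≠ u3 ∧
        w1 ≠ u2 ∧ w1 ≠ u3 ∧ w2 ≠ u1 ∧ w2 ≠ u3 ∧ w3 ≠ u1 ∧ w3 ≠ u2 ∧
        py u1 ≠ py u2 ∧ py u1 ≠ py u3 ∧ py u2 ≠ py u3 := by
    intro w1 h1 w2 h2 w3 h3 h12 h13 h23
    obtain ⟨u1, ev1, ew1, n1⟩ := hdat w1 h1
    obtain ⟨u2, ev2, ew2, n2⟩ := hdat w2 h2
    obtain ⟨u3, ev3, ew3, n3⟩ := hdat w3 h3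
    have uY : ∀ {w u : V}, (w, u) ∈ E → u ∈ Y := fun h => hY _ h
    have hu12 : u1 ≠ u2 := nbhd_ne n1 n2 h12 (hvS w1 h1)
    have hu13 : u1 ≠ u3 := nbhd_ne n1 n3 h13 (hvS w1 h1)
    have hu23 : u2 ≠ u3 := nbhd_ne n2 n3 h23 (hvS w2 h2)
    have mixed : ∀ {w u : V}, w ∈ S → u ∈ Y → w ≠ u := by
      intro w u hw hu h
      exact (Set.disjoint_left.mp disj (hwX w hw)) (h ▸ hu)
    refine ⟨u1, u2, u3, ev1, ev2, ev3, ew1, ew2, ew3, hu12, hu13, hu23,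
      mixed h1 (uY ew2), mixed h1 (uY ew3), mixed h2 (uY ew1),
      mixed h2 (uY ew3), mixed h3 (uY ew1), mixed h3 (uY ew2), ?_, ?_, ?_⟩
    · exact fun h => hu12 (hpy (uY ew1) (uY ew2) h)
    · exact fun h => hu13 (hpy (uY ew1) (uY ew3) h)
    · exact fun h => hu23 (hpy (uY ew2) (uY ew3) h)
  have hL : L.ncard ≤ 2 := by
    by_contra hL'
    push_neg at hL'
    obtain ⟨w1, h1, w2, h2, w3, h3, h12, h13, h23⟩ :=
      (Set.two_lt_ncard (hSfin.subset hLS)).mp hL'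
    obtain ⟨u1, u2, u3, ev1, ev2, ev3, ew1, ew2, ew3, hu12, hu13, hu23,
      m12, m13, m21, m23, m31, m32, p12, p13, p23⟩ :=
      triple w1 (hLS h1) w2 (hLS h2) w3 (hLS h3) h12 h13 h23
    exact tripleLeft hFP ev1 ev2 ev3 ew1 ew2 ew3 h12 h13 h23 hu12 hu13 hu23
      m12 m13 m21 m23 m31 m32 h1.2 h2.2 h3.2 p12 p13 p23
  have hR : R.ncard ≤ 2 := by
    by_contra hR'
    push_neg at hR'
    obtain ⟨w1, h1, w2, h2, w3, h3, h12, h13, h23⟩ :=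
      (Set.two_lt_ncard (hSfin.subset hRS)).mp hR'
    obtain ⟨u1, u2, u3, ev1, ev2, ev3, ew1, ew2, ew3, hu12, hu13, hu23,
      m12, m13, m21, m23, m31, m32, p12, p13, p23⟩ :=
      triple w1 (hRS h1) w2 (hRS h2) w3 (hRS h3) h12 h13 h23
    exact tripleRight hFP ev1 ev2 ev3 ew1 ew2 ew3 h12 h13 h23 hu12 hu13 hu23
      m12 m13 m21 m23 m31 m32 h1.2 h2.2 h3.2 p12 p13 p23
  calc S.ncard ≤ (L ∪ R).ncard :=
        Set.ncard_le_ncard hsub ((hSfin.subset hLS).union (hSfin.subset hRS))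
    _ ≤ L.ncard + R.ncard := Set.ncard_union_le L R
    _ ≤ 4 := by omega

/-- In a 2-layer fan-planar graph, at most four vertices `w ≠ v` have a common
degree-2 neighbor with `v`. -/
theorem stmt15 (G : BipGraph V) (h : AdmitsFanPlanar G) (v : V) :
    {w : V | w ≠ v ∧ ∃ u : V, G.deg u = 2 ∧ G.nbhd u = {v, w}}.ncard ≤ 4 := by
  classical
  obtain ⟨px, py, ⟨hpx, hpy⟩, hfp⟩ := h
  set S := {w : V | w ≠ v ∧ ∃ u : V, G.deg u = 2 ∧ G.nbhd u = {v, w}} with hSdef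
  by_contra hcon
  push_neg at hcon
  have hSfin : S.Finite := by
    by_contra hinf
    rw [Set.Infinite.ncard hinf] at hcon
    omega
  have hvS : ∀ w ∈ S, w ≠ v := fun w hw => hw.1
  have hadj : ∀ w ∈ S, ∃ u, G.Adj u v ∧ G.Adj u w ∧ G.nbhd u = {v, w} := by
    rintro w ⟨hwv, u, -, hnb⟩
    have hv' : v ∈ G.nbhd u := by rw [hnb]; exact Or.inl rfl
    have hw' : w ∈ G.nbhd u := by rw [hnb]; exact Or.inr rfl
    exact ⟨u, hv', hw', hnb⟩
  have hne : S.Nonempty := Set.nonempty_of_ncard_ne_zero (by omega)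
  obtain ⟨w0, hw0⟩ := hne
  obtain ⟨u0, hu0v, -, -⟩ := hadj w0 hw0
  have hFP : FP px py G.E := hfp
  rcases hu0v with h0 | h0
  · -- v ∈ Y
    have hvY : v ∈ G.Y := G.mem_snd _ h0
    have hvnX : v ∉ G.X := Set.disjoint_right.mp G.disj hvY
    set E' : Set (V × V) := {p | (p.2, p.1) ∈ G.E} with hE'
    have hFP' : FP py px E' := by
      intro e he
      obtain ⟨c, hc⟩ := hFP (e.2, e.1) he
      refine ⟨c, fun f hf hcr => ?_⟩
      have h2 := hc (f.2, f.1) hf (by unfold Cross at hcr ⊢; tauto)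
      tauto
    have hdat : ∀ w ∈ S, ∃ u, (v, u) ∈ E' ∧ (w, u) ∈ E' ∧ G.nbhd u = {v, w} := by
      intro w hw
      obtain ⟨u, huv, huw, hnb⟩ := hadj w hw
      have huv' : (u, v) ∈ G.E := by
        rcases huv with h | h
        · exact h
        · exact absurd (G.mem_fst _ h) hvnX
      have huX : u ∈ G.X := G.mem_fst _ huv'
      have huw' : (u, w) ∈ G.E := by
        rcases huw with h | h
        · exact h
        · exact absurd (G.mem_snd _ h) (Set.disjoint_left.mp G.disj huX)
      exact ⟨u, huv', huw', hnb⟩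
    have := mainAux G.disj.symm (fun e he => G.mem_snd (e.2, e.1) he)
      (fun e he => G.mem_fst (e.2, e.1) he) hpy hpx hFP' v hvY S G.nbhd hSfin hvS hdat
    omega
  · -- v ∈ X
    have hvX : v ∈ G.X := G.mem_fst _ h0
    have hvnY : v ∉ G.Y := Set.disjoint_left.mp G.disj hvX
    have hdat : ∀ w ∈ S, ∃ u, (v, u) ∈ G.E ∧ (w, u) ∈ G.E ∧ G.nbhd u = {v, w} := by
      intro w hw
      obtain ⟨u, huv, huw, hnb⟩ := hadj w hw
      have huv' : (v, u) ∈ G.E := by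
        rcases huv with h | h
        · exact absurd (G.mem_snd _ h) hvnY
        · exact h
      have huY : u ∈ G.Y := G.mem_snd _ huv'
      have huw' : (w, u) ∈ G.E := by
        rcases huw with h | h
        · exact absurd (G.mem_fst _ h) (Set.disjoint_right.mp G.disj huY)
        · exact h
      exact ⟨u, huv', huw', hnb⟩
    have := mainAux G.disj G.mem_fst G.mem_snd hpx hpy hFP v hvX S G.nbhd hSfin hvS hdat
    omega
end
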